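/- Strong convexity of linear-plus-KL objectives at their Gibbs minimizer: Let p be a probability density on ℝ^d, r : ℝ^d → ℝ a bounded measurable function, β > 0, and define F̃(q) := E_q[r] + β D_KL(q‖p). If q := e^{−r/β} p / ∫ e^{−r/β} p dx, then for every probability density q' absolutely continuous with respect to p with D_KL(q'‖p) < ∞, writing r_1 := dq/dp and r_2 := dq'/dp, one has F̃(q) ≤ F̃(q') − (β/2)·‖r_1 − r_2‖²_{L¹(p)}, where ‖r_1 − r_2‖_{L¹(p)} := ∫ |r_1 − r_2| dp. -/

import Mathlib

open MeasureTheory Real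

noncomputable section

/-- A probability density function w.r.t. the Lebesgue measure on ℝ^d. -/
def IsDensity {d : ℕ} (q : EuclideanSpace ℝ (Fin d) → ℝ) : Prop :=
  Measurable q ∧ (∀ x, 0 ≤ q x) ∧ (∫ x, q x) = 1

/-- Kullback–Leibler divergence between densities. -/
def KLd {d : ℕ} (q p : EuclideanSpace ℝ (Fin d) → ℝ) : ℝ :=
  ∫ x, q x * Real.log (q x / p x)

/-- The Gibbs density `e^{−r} p / ∫ e^{−r} p`. -/
def gibbsDensity {d : ℕ} (p r : EuclideanSpace ℝ (Fin d) → ℝ)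
    (x : EuclideanSpace ℝ (Fin d)) : ℝ :=
  Real.exp (-r x) * p x / ∫ y, Real.exp (-r y) * p y

/-!
With `Z = ∫ e^{-r/β} p` and `q = e^{-r/β} p / Z`, one has `log (q / p) = -r/β - log Z` wherever
`p > 0`, which gives the Gibbs variational identity `F̃(q') = F̃(q) + β D_KL(q'‖q)`. The theorem is
then Pinsker's inequality for `D_KL(q'‖q)`. That follows from the pointwise bound
`(a - b)² ≤ (b log (b/a) + a - b) · (2b + 4a)/3`, a rescaling of
`3 (t - 1)² ≤ (2t + 4) (t log t - t + 1)`, by Cauchy–Schwarz: the weight `(2b + 4a)/3` has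
total mass 2.
-/

open InformationTheory Set

lemma monotoneOn_log_sub_two_mul_sub_one_div_add_one :
    MonotoneOn (fun t : ℝ => log t - 2 * (t - 1) / (t + 1)) (Ioi 0) := by
  refine monotoneOn_of_hasDerivWithinAt_nonneg (convex_Ioi 0)
    (f' := fun t => (t - 1) ^ 2 / (t * (t + 1) ^ 2)) ?_ (fun t ht => ?_) (fun t ht => ?_)
  · exact (continuousOn_log.mono fun t ht => ne_of_gt ht).sub
      (ContinuousOn.div (by fun_prop) (by fun_prop) fun t (ht : 0 < t) => by positivity)
  · rw [interior_Ioi] at ht ⊢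
    have ht0 : t ≠ 0 := ne_of_gt ht
    have ht1 : t + 1 ≠ 0 := by simp only [mem_Ioi] at ht; positivity
    have h := ((hasDerivAt_log ht0).sub
      ((((hasDerivAt_id t).sub_const 1).const_mul 2).div ((hasDerivAt_id t).add_const 1) ht1))
    refine (h.congr_deriv ?_).hasDerivWithinAt
    simp only [id]
    field_simp
    ring
  · rw [interior_Ioi, mem_Ioi] at ht
    positivity

lemma sq_sub_one_le_mul_klFun {t : ℝ} (ht : 0 ≤ t) :
    3 * (t - 1) ^ 2 ≤ (2 * t + 4) * klFun t := by
  set g : ℝ → ℝ := fun t => (2 * t + 4) * klFun t - 3 * (t - 1) ^ 2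
  have hg : ∀ t, 0 < t → HasDerivAt g (4 * (t + 1) * (log t - 2 * (t - 1) / (t + 1))) t := by
    intro t ht
    have h := (((hasDerivAt_id t).const_mul 2).add_const 4).mul (hasDerivAt_klFun ht.ne')
      |>.sub ((((hasDerivAt_id t).sub_const 1).pow 2).const_mul 3)
    refine h.congr_deriv ?_
    simp only [klFun_apply, id]
    field_simp
    ring
  have hf := monotoneOn_log_sub_two_mul_sub_one_div_add_one
  have hf1 : log 1 - 2 * (1 - 1) / (1 + 1) = 0 := by norm_num
  suffices 0 ≤ g t by simpa [g] using this
  have hg1 : g 1 = 0 := by simp [g, klFun_one]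
  rcases le_total t 1 with h1 | h1
  · have hanti : AntitoneOn g (Icc 0 1) := by
      refine antitoneOn_of_hasDerivWithinAt_nonpos (convex_Icc 0 1) (by fun_prop)
        (f' := fun x => 4 * (x + 1) * (log x - 2 * (x - 1) / (x + 1)))
        (fun x hx => ?_) (fun x hx => ?_) <;> rw [interior_Icc] at hx
      · exact (hg x hx.1).hasDerivWithinAt
      · exact mul_nonpos_of_nonneg_of_nonpos (by linarith [hx.1])
          ((hf hx.1 (mem_Ioi.2 one_pos) hx.2.le).trans_eq hf1)
    simpa [hg1] using hanti ⟨ht, h1⟩ ⟨zero_le_one, le_rfl⟩ h1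
  · have hmono : MonotoneOn g (Ici 1) := by
      refine monotoneOn_of_hasDerivWithinAt_nonneg (convex_Ici 1) (by fun_prop)
        (f' := fun x => 4 * (x + 1) * (log x - 2 * (x - 1) / (x + 1)))
        (fun x hx => ?_) (fun x hx => ?_) <;> rw [interior_Ici] at hx
      · exact (hg x (one_pos.trans hx)).hasDerivWithinAt
      · exact mul_nonneg (by linarith [mem_Ioi.1 hx])
          (hf1.symm.trans_le (hf (mem_Ioi.2 one_pos) (mem_Ioi.2 (one_pos.trans hx)) hx.le))
    simpa [hg1] using hmono self_mem_Ici h1 h1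

lemma mul_log_div_add_sub_eq_mul_klFun {a : ℝ} (b : ℝ) (ha : a ≠ 0) :
    b * log (b / a) + a - b = a * klFun (b / a) := by
  rw [klFun_apply]
  field_simp

lemma mul_log_div_add_sub_nonneg {a b : ℝ} (ha : 0 ≤ a) (hb : 0 ≤ b) (hab : a = 0 → b = 0) :
    0 ≤ b * log (b / a) + a - b := by
  rcases ha.eq_or_lt with rfl | ha
  · simp [hab rfl]
  · rw [mul_log_div_add_sub_eq_mul_klFun b ha.ne']
    exact mul_nonneg ha.le (klFun_nonneg (div_nonneg hb ha.le))

lemma sq_sub_le_mul_log_div_add_sub_mul {a b : ℝ} (ha : 0 ≤ a) (hb : 0 ≤ b)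
    (hab : a = 0 → b = 0) :
    (a - b) ^ 2 ≤ (b * log (b / a) + a - b) * ((2 * b + 4 * a) / 3) := by
  rcases ha.eq_or_lt with rfl | ha
  · simp [hab rfl]
  · have key := sq_sub_one_le_mul_klFun (div_nonneg hb ha.le)
    rw [mul_log_div_add_sub_eq_mul_klFun b ha.ne']
    calc (a - b) ^ 2 = a ^ 2 / 3 * (3 * (b / a - 1) ^ 2) := by field_simp; ring
      _ ≤ a ^ 2 / 3 * ((2 * (b / a) + 4) * klFun (b / a)) := by gcongr
      _ = a * klFun (b / a) * ((2 * b + 4 * a) / 3) := by field_simp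

section Integral

variable {α : Type*} [MeasurableSpace α] {μ : Measure α}

lemma sq_integral_le_integral_mul_integral_of_sq_le_mul {f g h : α → ℝ}
    (hf : ∀ x, 0 ≤ f x) (hg : ∀ x, 0 ≤ g x) (hh : ∀ x, 0 ≤ h x) (hfi : Integrable f μ)
    (hgi : Integrable g μ) (hfgh : ∀ x, h x ^ 2 ≤ f x * g x) :
    (∫ x, h x ∂μ) ^ 2 ≤ (∫ x, f x ∂μ) * ∫ x, g x ∂μ := by
  have hL2 : ∀ {u : α → ℝ}, (∀ x, 0 ≤ u x) → Integrable u μ → MemLp (fun x => √(u x)) 2 μ :=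
    fun {u} hu hui =>
      (memLp_two_iff_integrable_sq (continuous_sqrt.comp_aestronglyMeasurable hui.1)).2 <|
        hui.congr (.of_forall fun x => (sq_sqrt (hu x)).symm)
  have hh_le : ∀ x, h x ≤ √(f x) * √(g x) := fun x => by
    rw [← sqrt_mul (hf x)]
    exact le_sqrt_of_sq_le (hfgh x)
  have holder := integral_mul_le_Lp_mul_Lq_of_nonneg (μ := μ) Real.HolderConjugate.two_two
    (.of_forall fun x => sqrt_nonneg (f x))
    (.of_forall fun x => sqrt_nonneg (g x))
    (by simpa using hL2 hf hfi) (by simpa using hL2 hg hgi)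
  have hsq : ∀ {u : α → ℝ}, (∀ x, 0 ≤ u x) →
      (∫ x, √(u x) ^ (2 : ℝ) ∂μ) ^ (1 / 2 : ℝ) = √(∫ x, u x ∂μ) := fun {u} hu => by
    simp_rw [rpow_two, sq_sqrt (hu _), sqrt_eq_rpow]
  rw [hsq hf, hsq hg, ← sqrt_mul (integral_nonneg hf)] at holder
  have hint : ∫ x, h x ∂μ ≤ √((∫ x, f x ∂μ) * ∫ x, g x ∂μ) :=
    (integral_mono_of_nonneg (.of_forall hh)
      ((hL2 hf hfi).integrable_mul (hL2 hg hgi)) (.of_forall hh_le)).trans holder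
  exact (pow_le_pow_left₀ (integral_nonneg hh) hint 2).trans
    (sq_sqrt (mul_nonneg (integral_nonneg hf) (integral_nonneg hg))).le

theorem sq_integral_abs_sub_le_two_mul_integral_mul_log_div {a b : α → ℝ} (ha : ∀ x, 0 ≤ a x)
    (hb : ∀ x, 0 ≤ b x) (hai : Integrable a μ) (hbi : Integrable b μ) (ha1 : ∫ x, a x ∂μ = 1)
    (hb1 : ∫ x, b x ∂μ = 1) (hab : ∀ x, a x = 0 → b x = 0)
    (hKL : Integrable (fun x => b x * log (b x / a x)) μ) :
    (∫ x, |a x - b x| ∂μ) ^ 2 ≤ 2 * ∫ x, b x * log (b x / a x) ∂μ := by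
  have hfi : Integrable (fun x => b x * log (b x / a x) + a x - b x) μ := (hKL.add hai).sub hbi
  have hgi : Integrable (fun x => (2 * b x + 4 * a x) / 3) μ :=
    ((hbi.const_mul 2).add (hai.const_mul 4)).div_const 3
  have hf : ∫ x, b x * log (b x / a x) + a x - b x ∂μ = ∫ x, b x * log (b x / a x) ∂μ := by
    rw [integral_sub (hKL.fun_add hai) hbi, integral_add hKL hai, ha1, hb1, add_sub_cancel_right]
  have hg : ∫ x, (2 * b x + 4 * a x) / 3 ∂μ = 2 := by
    rw [integral_div, integral_add (hbi.const_mul 2) (hai.const_mul 4), integral_const_mul,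
      integral_const_mul, ha1, hb1]
    norm_num
  have := sq_integral_le_integral_mul_integral_of_sq_le_mul
    (fun x => mul_log_div_add_sub_nonneg (ha x) (hb x) (hab x))
    (fun x => by have := ha x; have := hb x; positivity) (fun x => abs_nonneg (a x - b x)) hfi hgi
    (fun x => (sq_abs _).trans_le (sq_sub_le_mul_log_div_add_sub_mul (ha x) (hb x) (hab x)))
  rwa [hf, hg, mul_comm] at this

lemma integral_abs_div_sub_div_mul_eq {a b c : α → ℝ} (hc : ∀ x, 0 ≤ c x)
    (ha : ∀ x, c x = 0 → a x = 0) (hb : ∀ x, c x = 0 → b x = 0) :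
    ∫ x, |a x / c x - b x / c x| * c x ∂μ = ∫ x, |a x - b x| ∂μ := by
  refine integral_congr_ae (.of_forall fun x => ?_)
  dsimp only
  rcases (hc x).eq_or_lt with hcx | hcx
  · simp [← hcx, ha x hcx.symm, hb x hcx.symm]
  · rw [div_sub_div_same, abs_div, abs_of_pos hcx, div_mul_cancel₀ _ hcx.ne']

end Integral

section Gibbs

variable {d : ℕ} {p s q : EuclideanSpace ℝ (Fin d) → ℝ} {M : ℝ}

def partitionFunction (p s : EuclideanSpace ℝ (Fin d) → ℝ) : ℝ :=
  ∫ y, exp (-s y) * p y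

lemma gibbsDensity_apply (x : EuclideanSpace ℝ (Fin d)) :
    gibbsDensity p s x = exp (-s x) * p x / partitionFunction p s := rfl

lemma IsDensity.integrable (hp : IsDensity p) : Integrable p :=
  Integrable.of_integral_ne_zero (by rw [hp.2.2]; exact one_ne_zero)

lemma integrable_mul_of_abs_le (hs : Measurable s) (hsM : ∀ x, |s x| ≤ M) (hq : Integrable q) :
    Integrable (fun x => s x * q x) :=
  hq.bdd_mul hs.aestronglyMeasurable (.of_forall hsM)

lemma integrable_exp_neg_mul (hp : IsDensity p) (hs : Measurable s) (hsM : ∀ x, M ≤ s x) :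
    Integrable (fun x => exp (-s x) * p x) :=
  hp.integrable.bdd_mul (c := exp (-M)) (by fun_prop) <| .of_forall fun x => by
    rw [norm_of_nonneg (exp_nonneg _)]
    exact exp_le_exp.2 (neg_le_neg (hsM x))

lemma partitionFunction_pos (hp : IsDensity p) (hs : Measurable s) (hsM : ∀ x, M ≤ s x) :
    0 < partitionFunction p s := by
  have hsupp : Function.support (fun x => exp (-s x) * p x) = Function.support p := by
    ext x
    simp [(exp_pos (-s x)).ne']
  rw [partitionFunction, integral_pos_iff_support_of_nonneg
    (fun x => mul_nonneg (exp_nonneg _) (hp.2.1 x)) (integrable_exp_neg_mul hp hs hsM), hsupp,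
    ← integral_pos_iff_support_of_nonneg hp.2.1 hp.integrable, hp.2.2]
  exact one_pos

lemma isDensity_gibbsDensity (hp : IsDensity p) (hs : Measurable s) (hsM : ∀ x, M ≤ s x) :
    IsDensity (gibbsDensity p s) := by
  have hZ := partitionFunction_pos hp hs hsM
  refine ⟨(hs.neg.exp.mul hp.1).div_const _, fun x => ?_, ?_⟩
  · rw [gibbsDensity_apply]
    exact div_nonneg (mul_nonneg (exp_nonneg _) (hp.2.1 x)) hZ.le
  · simp_rw [gibbsDensity_apply, integral_div]
    exact div_self hZ.ne'

lemma gibbsDensity_eq_zero_iff (hZ : partitionFunction p s ≠ 0)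
    {x : EuclideanSpace ℝ (Fin d)} : gibbsDensity p s x = 0 ↔ p x = 0 := by
  simp [gibbsDensity_apply, hZ, (exp_pos _).ne']

lemma log_gibbsDensity_div {x : EuclideanSpace ℝ (Fin d)} (hZ : partitionFunction p s ≠ 0)
    (hx : p x ≠ 0) : log (gibbsDensity p s x / p x) = -s x - log (partitionFunction p s) := by
  rw [gibbsDensity_apply, mul_div_right_comm, mul_div_cancel_right₀ _ hx,
    log_div (exp_pos _).ne' hZ, log_exp]

lemma mul_log_div_gibbsDensity {x : EuclideanSpace ℝ (Fin d)} (hZ : partitionFunction p s ≠ 0)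
    (hx : p x = 0 → q x = 0) :
    q x * log (q x / gibbsDensity p s x)
      = q x * log (q x / p x) + (s x + log (partitionFunction p s)) * q x := by
  by_cases hq : q x = 0
  · simp [hq]
  have hpx : p x ≠ 0 := mt hx hq
  have hgx : gibbsDensity p s x ≠ 0 := (gibbsDensity_eq_zero_iff hZ).not.2 hpx
  rw [← div_div_div_cancel_right₀ hpx, log_div (div_ne_zero hq hpx) (div_ne_zero hgx hpx),
    log_gibbsDensity_div hZ hpx]
  ring

lemma integrable_mul_log_div_gibbsDensity (hp : IsDensity p) (hs : Measurable s)
    (hsM : ∀ x, |s x| ≤ M) (hq : IsDensity q) (hac : ∀ x, p x = 0 → q x = 0)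
    (hKL : Integrable (fun x => q x * log (q x / p x))) :
    Integrable (fun x => q x * log (q x / gibbsDensity p s x)) := by
  have hZ := (partitionFunction_pos hp hs fun x => (abs_le.1 (hsM x)).1).ne'
  simp_rw [mul_log_div_gibbsDensity hZ (hac _), add_mul]
  exact hKL.add ((integrable_mul_of_abs_le hs hsM hq.integrable).add (hq.integrable.const_mul _))

lemma integral_mul_log_div_gibbsDensity (hp : IsDensity p) (hs : Measurable s)
    (hsM : ∀ x, |s x| ≤ M) (hq : IsDensity q) (hac : ∀ x, p x = 0 → q x = 0)
    (hKL : Integrable (fun x => q x * log (q x / p x))) :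
    ∫ x, q x * log (q x / gibbsDensity p s x)
      = KLd q p + (∫ x, s x * q x) + log (partitionFunction p s) := by
  have hZ := (partitionFunction_pos hp hs fun x => (abs_le.1 (hsM x)).1).ne'
  have hsq := integrable_mul_of_abs_le hs hsM hq.integrable
  simp_rw [mul_log_div_gibbsDensity hZ (hac _), add_mul]
  rw [integral_add hKL (hsq.fun_add (hq.integrable.const_mul _)), integral_add hsq
    (hq.integrable.const_mul _), integral_const_mul, hq.2.2, mul_one, KLd, add_assoc]

lemma KLd_gibbsDensity (hp : IsDensity p) (hs : Measurable s) (hsM : ∀ x, |s x| ≤ M) :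
    KLd (gibbsDensity p s) p
      = -(∫ x, s x * gibbsDensity p s x) - log (partitionFunction p s) := by
  have hZ := (partitionFunction_pos hp hs fun x => (abs_le.1 (hsM x)).1).ne'
  have hq := isDensity_gibbsDensity hp hs fun x => (abs_le.1 (hsM x)).1
  have hself : ∀ x, gibbsDensity p s x * log (gibbsDensity p s x / p x)
      = -(s x * gibbsDensity p s x) - log (partitionFunction p s) * gibbsDensity p s x := by
    intro x
    have := mul_log_div_gibbsDensity (q := gibbsDensity p s) (x := x) hZ
      (gibbsDensity_eq_zero_iff hZ).2
    rw [show gibbsDensity p s x * log (gibbsDensity p s x / gibbsDensity p s x) = 0 by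
      by_cases h : gibbsDensity p s x = 0 <;> simp [h]] at this
    linarith
  rw [KLd, integral_congr_ae (.of_forall hself), integral_sub
    (integrable_mul_of_abs_le hs hsM hq.integrable).fun_neg (hq.integrable.const_mul _),
    integral_neg, integral_const_mul, hq.2.2, mul_one]

end Gibbs

def freeEnergy {d : ℕ} (p r : EuclideanSpace ℝ (Fin d) → ℝ) (β : ℝ)
    (q : EuclideanSpace ℝ (Fin d) → ℝ) : ℝ :=
  (∫ x, r x * q x) + β * KLd q p

theorem freeEnergy_eq_freeEnergy_gibbsDensity_add {d : ℕ}
    {p r q : EuclideanSpace ℝ (Fin d) → ℝ} {β C : ℝ} (hβ : β ≠ 0) (hp : IsDensity p)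
    (hr : Measurable r) (hrC : ∀ x, |r x| ≤ C) (hq : IsDensity q)
    (hac : ∀ x, p x = 0 → q x = 0) (hKL : Integrable (fun x => q x * log (q x / p x))) :
    freeEnergy p r β q = freeEnergy p r β (gibbsDensity p fun y => r y / β)
      + β * ∫ x, q x * log (q x / gibbsDensity p (fun y => r y / β) x) := by
  have hs : Measurable fun y => r y / β := hr.div_const β
  have hsM : ∀ x, |r x / β| ≤ C / |β| := fun x => by
    rw [abs_div]
    exact div_le_div_of_nonneg_right (hrC x) (abs_nonneg β)
  have hdiv : ∀ q : EuclideanSpace ℝ (Fin d) → ℝ, ∫ x, r x / β * q x = (∫ x, r x * q x) / β :=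
    fun q => by simp_rw [div_mul_eq_mul_div, integral_div]
  rw [freeEnergy, freeEnergy, integral_mul_log_div_gibbsDensity hp hs hsM hq hac hKL,
    KLd_gibbsDensity hp hs hsM, hdiv, hdiv]
  field_simp
  ring

/-- Strong convexity of linear-plus-KL objectives at their Gibbs minimizer:
if `q = e^{−r/β} p / ∫ e^{−r/β} p`, then
`F̃(q) ≤ F̃(q') − (β/2) ‖dq/dp − dq'/dp‖²_{L¹(p)}`. -/
theorem gibbs_strong_convexity
    {d : ℕ} (p r : EuclideanSpace ℝ (Fin d) → ℝ) (β C : ℝ)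
    (hβ : 0 < β) (hp : IsDensity p) (hr : Measurable r) (hrb : ∀ x, |r x| ≤ C)
    (q' : EuclideanSpace ℝ (Fin d) → ℝ)
    (hq' : IsDensity q') (hac : ∀ x, p x = 0 → q' x = 0)
    (hKL : Integrable (fun x => q' x * Real.log (q' x / p x))) :
    (∫ x, r x * gibbsDensity p (fun y => r y / β) x)
        + β * KLd (gibbsDensity p (fun y => r y / β)) p
      ≤ (∫ x, r x * q' x) + β * KLd q' p
        - (β / 2) *
          (∫ x, |gibbsDensity p (fun y => r y / β) x / p x - q' x / p x| * p x) ^ 2 := by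
  set q := gibbsDensity p fun y => r y / β
  have hs : Measurable fun y => r y / β := hr.div_const β
  have hsM : ∀ x, |r x / β| ≤ C / β := fun x => by
    rw [abs_div, abs_of_pos hβ]
    exact div_le_div_of_nonneg_right (hrb x) hβ.le
  have hsM' : ∀ x, -(C / β) ≤ r x / β := fun x => (abs_le.1 (hsM x)).1
  have hq := isDensity_gibbsDensity hp hs hsM'
  have hq_zero : ∀ x, q x = 0 ↔ p x = 0 := fun x =>
    gibbsDensity_eq_zero_iff (partitionFunction_pos hp hs hsM').ne'
  have hpinsker := sq_integral_abs_sub_le_two_mul_integral_mul_log_div hq.2.1 hq'.2.1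
    hq.integrable hq'.integrable hq.2.2 hq'.2.2 (fun x hx => hac x ((hq_zero x).1 hx))
    (integrable_mul_log_div_gibbsDensity hp hs hsM hq' hac hKL)
  have hvar := freeEnergy_eq_freeEnergy_gibbsDensity_add hβ.ne' hp hr hrb hq' hac hKL
  rw [integral_abs_div_sub_div_mul_eq hp.2.1 (fun x => (hq_zero x).2) hac]
  change freeEnergy p r β q ≤ freeEnergy p r β q' - _
  linarith [mul_le_mul_of_nonneg_left hpinsker hβ.le]

end
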